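/- For any metric space X, a function f : 2^ω → X is (s)-measurable if and only if for every perfect tree T there exists a perfect subtree Q ⊆ T such that the restriction of f to [Q] is continuous. -/

import Mathlib

open Set

/-- A perfect (Sacks) tree: nonempty, downward closed, and every node has a splitting extension. -/
def IsPerfectTree (T : Set (List Bool)) : Prop :=
  T.Nonempty ∧ (∀ t ∈ T, ∀ n, t.take n ∈ T) ∧
    ∀ t ∈ T, ∃ s ∈ T, t <+: s ∧ s ++ [false] ∈ T ∧ s ++ [true] ∈ T

/-- The set of infinite branches of a tree. -/
def branches (T : Set (List Bool)) : Set (ℕ → Bool) :=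
  {x | ∀ n, (List.ofFn fun i : Fin n => x i) ∈ T}

/-- `A` is an (s)-set. -/
def MarczewskiS (A : Set (ℕ → Bool)) : Prop :=
  ∀ T, IsPerfectTree T → ∃ Q, IsPerfectTree Q ∧ Q ⊆ T ∧
    (branches Q ⊆ A ∨ branches Q ∩ A = ∅)

/-- `A` is an (s⁰)-set. -/
def S0Set (A : Set (ℕ → Bool)) : Prop :=
  ∀ T, IsPerfectTree T → ∃ Q, IsPerfectTree Q ∧ Q ⊆ T ∧ branches Q ∩ A = ∅

/-!
If `f` is continuous on `[Q]` and `f x ∈ U` for some `x ∈ [Q]`, then `f ⁻¹' U` contains the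
branches of `Q` through a long enough initial segment of `x`, and these form a perfect subtree.

Conversely, by Sacks fusion it suffices to find below every perfect tree a perfect subtree on whose
branches `f` oscillates by less than `ε`. Stone's theorem covers `X` by countably many families of
pairwise disjoint open sets of diameter `< ε`; by fusion again, one family covers `f` on the
branches of some perfect subtree `R`, and sending each branch to the member containing its image
gives a map `g` on `[R]` all of whose preimages are (s)-sets relative to `R`. Such a `g` is constant
on a perfect subtree. Indeed, if any two perfect subtrees of `R` contain perfect subtrees with
disjoint `g`-images, fusion makes `g` injective on some `[Q]`, and then the `g`-image of a Bernstein
set has a preimage that is not an (s)-set. Otherwise some `R₁, R₂` have no such subtrees, and the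
sets into which `g` maps a perfect subtree of `R₁` form a countably complete ultrafilter; it is
principal because the range of `g` injects into `2^ω` through a right inverse of `g`.
-/

open Cardinal Filter Function Topology PiNat

def initSeg (x : ℕ → Bool) (n : ℕ) : List Bool := List.ofFn fun i : Fin n => x i

@[simp] lemma length_initSeg (x : ℕ → Bool) (n : ℕ) : (initSeg x n).length = n :=
  List.length_ofFn

@[simp] lemma getElem_initSeg (x : ℕ → Bool) {n i : ℕ} (h : i < (initSeg x n).length) :
    (initSeg x n)[i] = x i :=
  List.getElem_ofFn ..

lemma initSeg_succ (x : ℕ → Bool) (n : ℕ) : initSeg x (n + 1) = initSeg x n ++ [x n] := by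
  rw [initSeg, initSeg, List.ofFn_succ', List.concat_eq_append]
  rfl

lemma initSeg_prefix_initSeg (x : ℕ → Bool) {m n : ℕ} (h : m ≤ n) :
    initSeg x m <+: initSeg x n := by
  refine List.prefix_iff_eq_take.2 (List.ext_getElem (by simp [h]) fun i h₁ h₂ => ?_)
  simp

lemma initSeg_eq_initSeg_iff {x y : ℕ → Bool} {n : ℕ} :
    initSeg y n = initSeg x n ↔ y ∈ cylinder x n := by
  rw [mem_cylinder_iff, List.ext_get_iff]
  simp

def IsInitSeg (l : List Bool) (x : ℕ → Bool) : Prop := initSeg x l.length = l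

namespace IsInitSeg

variable {l l' : List Bool} {x y : ℕ → Bool}

lemma getElem (h : IsInitSeg l x) {i : ℕ} (hi : i < l.length) : l[i] = x i := by
  rw [List.getElem_of_eq h.symm hi, getElem_initSeg]

lemma prefix_initSeg (h : IsInitSeg l x) {n : ℕ} (hn : l.length ≤ n) : l <+: initSeg x n :=
  h ▸ initSeg_prefix_initSeg x hn

lemma initSeg_prefix (h : IsInitSeg l x) {n : ℕ} (hn : n ≤ l.length) : initSeg x n <+: l :=
  h ▸ initSeg_prefix_initSeg x hn

lemma of_prefix (h : IsInitSeg l x) (h' : l' <+: l) : IsInitSeg l' x :=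
  (List.prefix_of_prefix_length_le (initSeg_prefix_initSeg x h'.length_le)
    (h.symm ▸ h') (by simp)).eq_of_length (by simp)

lemma prefix_or_prefix (h : IsInitSeg l x) (h' : IsInitSeg l' x) : l <+: l' ∨ l' <+: l := by
  rcases le_total l.length l'.length with hl | hl
  · exact .inl (h' ▸ h.prefix_initSeg hl)
  · exact .inr (h ▸ h'.prefix_initSeg hl)

lemma append_singleton (h : IsInitSeg l x) : IsInitSeg (l ++ [x l.length]) x := by
  rw [IsInitSeg, List.length_append, List.length_singleton, initSeg_succ, h]

lemma of_mem_cylinder (h : IsInitSeg l x) (hy : y ∈ cylinder x l.length) : IsInitSeg l y :=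
  (initSeg_eq_initSeg_iff.2 hy).trans h

end IsInitSeg

lemma exists_forall_isInitSeg (u : ℕ → List Bool) (hu : ∀ ⦃m n⦄, m ≤ n → u m <+: u n)
    (hlen : ∀ n, n ≤ (u n).length) : ∃ x, ∀ n, IsInitSeg (u n) x := by
  refine ⟨fun i => (u (i + 1))[i]'(by have := hlen (i + 1); omega), fun n => ?_⟩
  refine List.ext_getElem (by simp) fun i _ h => ?_
  simp only [getElem_initSeg]
  rcases le_total (i + 1) n with hin | hni
  · exact (hu hin).getElem _
  · exact ((hu hni).getElem h).symm

lemma eq_of_append_singleton_prefix {α : Type*} {u w : List α} {a b : α}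
    (ha : u ++ [a] <+: w) (hb : u ++ [b] <+: w) : a = b := by
  simpa using (List.prefix_of_prefix_length_le ha hb (by simp)).eq_of_length (by simp)

lemma exists_append_singleton_prefix {α : Type*} {s t : List α} (h : s <+: t) (hne : s ≠ t) :
    ∃ i, s ++ [i] <+: t := by
  obtain ⟨_ | ⟨i, u⟩, rfl⟩ := h
  · simp at hne
  · exact ⟨i, u, by simp⟩

lemma exists_append_singleton_prefix_of_not_prefix {s t : List Bool} (h : ¬s <+: t)
    (h' : ¬t <+: s) : ∃ a i, a ++ [i] <+: s ∧ a ++ [!i] <+: t := by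
  induction s generalizing t with
  | nil => exact absurd t.nil_prefix h
  | cons j s ih =>
    obtain _ | ⟨k, t⟩ := t
    · exact absurd List.nil_prefix h'
    obtain rfl | hjk := eq_or_ne j k
    · obtain ⟨a, i, hs, ht⟩ := ih (by simpa using h) (by simpa using h')
      exact ⟨j :: a, i, by simpa using hs, by simpa using ht⟩
    · exact ⟨[], j, by simp, by cases j <;> cases k <;> simp_all⟩

namespace IsPerfectTree

variable {T : Set (List Bool)} (hT : IsPerfectTree T)
include hT

lemma mem_of_prefix {u v : List Bool} (huv : u <+: v) (hv : v ∈ T) : u ∈ T :=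
  List.prefix_iff_eq_take.1 huv ▸ hT.2.1 v hv u.length

lemma nil_mem : [] ∈ T :=
  hT.1.elim fun _ ht => hT.mem_of_prefix List.nil_prefix ht

end IsPerfectTree

lemma branches_mono {T T' : Set (List Bool)} (h : T ⊆ T') : branches T ⊆ branches T' :=
  fun _ hx n => h (hx n)

noncomputable def splittingNode (T : Set (List Bool)) : List Bool :=
  Classical.epsilon fun s => s ++ [false] ∈ T ∧ s ++ [true] ∈ T

lemma IsPerfectTree.splittingNode_append_mem {T : Set (List Bool)} (hT : IsPerfectTree T)
    (i : Bool) : splittingNode T ++ [i] ∈ T := by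
  obtain ⟨s, -, -, h₀, h₁⟩ := hT.2.2 [] hT.nil_mem
  have := Classical.epsilon_spec (p := fun s => s ++ [false] ∈ T ∧ s ++ [true] ∈ T) ⟨s, h₀, h₁⟩
  cases i
  exacts [this.1, this.2]

def subtreeThrough (T : Set (List Bool)) (v : List Bool) : Set (List Bool) :=
  {u ∈ T | u <+: v ∨ v <+: u}

lemma subtreeThrough_subset (T : Set (List Bool)) (v : List Bool) : subtreeThrough T v ⊆ T :=
  fun _ h => h.1

lemma IsPerfectTree.subtreeThrough {T : Set (List Bool)} (hT : IsPerfectTree T) {v : List Bool}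
    (hv : v ∈ T) : IsPerfectTree (subtreeThrough T v) := by
  refine ⟨⟨v, hv, .inl List.prefix_rfl⟩, ?_, ?_⟩
  · rintro t ⟨htT, hcomp⟩ n
    refine ⟨hT.2.1 t htT n, ?_⟩
    rcases hcomp with h | h
    · exact .inl ((List.take_prefix n t).trans h)
    · rw [List.prefix_iff_eq_take.1 h]
      rcases le_total n v.length with hn | hn
      exacts [.inl (List.take_isPrefix_take.2 (.inl hn)),
        .inr (List.take_isPrefix_take.2 (.inl hn))]
  · rintro t ⟨htT, hcomp⟩
    obtain ⟨w, hw, hwv⟩ : ∃ w ∈ T, t <+: w ∧ v <+: w := by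
      rcases hcomp with h | h
      exacts [⟨v, hv, h, List.prefix_rfl⟩, ⟨t, htT, List.prefix_rfl, h⟩]
    obtain ⟨s, hs, hws, hs₀, hs₁⟩ := hT.2.2 w hw
    have hvs : v <+: s := hwv.2.trans hws
    exact ⟨s, ⟨hs, .inr hvs⟩, hwv.1.trans hws, ⟨hs₀, .inr (hvs.trans (List.prefix_append _ _))⟩,
      ⟨hs₁, .inr (hvs.trans (List.prefix_append _ _))⟩⟩

lemma prefix_of_append_mem_subtreeThrough {T : Set (List Bool)} {s v : List Bool}
    (h₀ : s ++ [false] ∈ subtreeThrough T v) (h₁ : s ++ [true] ∈ subtreeThrough T v) :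
    v <+: s := by
  by_cases hs : s.length < v.length
  · have key : ∀ i, s ++ [i] ∈ subtreeThrough T v → s ++ [i] <+: v := fun i hi =>
      hi.2.elim id fun h => (h.eq_of_length (by have := h.length_le; simp at this ⊢; omega)) ▸
        List.prefix_rfl
    exact absurd (eq_of_append_singleton_prefix (key _ h₀) (key _ h₁)) Bool.false_ne_true
  · rcases h₀.2 with h | h
    · exact absurd h.length_le (by simp; omega)
    · exact List.prefix_of_prefix_length_le h (List.prefix_append _ _) (by omega)

lemma mem_branches_subtreeThrough {T : Set (List Bool)} {v : List Bool} {x : ℕ → Bool} :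
    x ∈ branches (subtreeThrough T v) ↔ x ∈ branches T ∧ IsInitSeg v x := by
  refine ⟨fun hx => ⟨branches_mono (subtreeThrough_subset T v) hx, ?_⟩,
    fun ⟨hx, hv⟩ n => ⟨hx n, ?_⟩⟩
  · rcases (hx v.length).2 with h | h
    exacts [h.eq_of_length (by simp), (h.eq_of_length (by simp)).symm]
  · rcases le_total n v.length with hn | hn
    exacts [.inl (hv ▸ initSeg_prefix_initSeg x hn), .inr (hv.prefix_initSeg hn)]

def IsSplittingSystem (σ : List Bool → List Bool) : Prop :=
  ∀ s i, σ s ++ [i] <+: σ (s ++ [i])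

def spanTree (σ : List Bool → List Bool) : Set (List Bool) := {u | ∃ s, u <+: σ s}

namespace IsSplittingSystem

variable {σ : List Bool → List Bool} (hσ : IsSplittingSystem σ)
include hσ

lemma prefix_of_prefix {s t : List Bool} (h : s <+: t) : σ s <+: σ t := by
  obtain ⟨u, rfl⟩ := h
  induction u using List.reverseRecOn with
  | nil => simp
  | append_singleton u i ih =>
    rw [← List.append_assoc]
    exact ih.trans ((List.prefix_append _ _).trans (hσ _ i))

lemma length_le (s : List Bool) : s.length ≤ (σ s).length := by
  induction s using List.reverseRecOn with
  | nil => simp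
  | append_singleton s i ih =>
    have := (hσ s i).length_le
    simp only [List.length_append, List.length_singleton] at this ⊢
    omega

lemma prefix_or_prefix {s t w : List Bool} (hs : σ s <+: w) (ht : σ t <+: w) :
    s <+: t ∨ t <+: s := by
  by_contra! h
  obtain ⟨a, i, has, hat⟩ := exists_append_singleton_prefix_of_not_prefix h.1 h.2
  have h₁ := ((hσ a i).trans (hσ.prefix_of_prefix has)).trans hs
  have h₂ := ((hσ a !i).trans (hσ.prefix_of_prefix hat)).trans ht
  simpa using eq_of_append_singleton_prefix h₁ h₂

lemma isPerfectTree_spanTree : IsPerfectTree (spanTree σ) := by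
  refine ⟨⟨[], [], List.nil_prefix⟩, fun t ⟨s, hs⟩ n => ⟨s, (List.take_prefix n t).trans hs⟩, ?_⟩
  rintro t ⟨s, hs⟩
  exact ⟨σ s, ⟨s, List.prefix_rfl⟩, hs, ⟨_, hσ s false⟩, ⟨_, hσ s true⟩⟩

lemma exists_isInitSeg {x : ℕ → Bool} (hx : x ∈ branches (spanTree σ)) (n : ℕ) :
    ∃ s, s.length = n ∧ IsInitSeg (σ s) x := by
  induction n with
  | zero =>
    obtain ⟨t, ht⟩ := hx (σ []).length
    exact ⟨[], rfl, (List.prefix_of_prefix_length_le ht (hσ.prefix_of_prefix t.nil_prefix)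
      (by simp)).eq_of_length (by simp)⟩
  | succ n ih =>
    obtain ⟨s, rfl, hs⟩ := ih
    -- the bit of `x` following `σ s` selects the successor of `s` one level up
    obtain ⟨t, ht⟩ := hx (σ (s ++ [x (σ s).length])).length
    have hst : σ s ++ [x (σ s).length] <+: σ t :=
      (hs.append_singleton.prefix_initSeg (hσ s _).length_le).trans ht
    have hts : ¬t <+: s := fun h => by
      have h₁ := (hσ.prefix_of_prefix h).length_le
      have h₂ := hst.length_le
      simp only [List.length_append, List.length_singleton] at h₂
      omega
    obtain ⟨j, hj⟩ := exists_append_singleton_prefix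
      ((hσ.prefix_or_prefix ((List.prefix_append _ _).trans hst) List.prefix_rfl).resolve_right hts)
      (fun h => hts (h ▸ List.prefix_rfl))
    obtain rfl : j = x (σ s).length :=
      eq_of_append_singleton_prefix ((hσ s j).trans (hσ.prefix_of_prefix hj)) hst
    exact ⟨s ++ [_], by simp, (List.prefix_of_prefix_length_le ht (hσ.prefix_of_prefix hj)
      (by simp)).eq_of_length (by simp)⟩

lemma continuum_le_mk_branches : 𝔠 ≤ #(branches (spanTree σ)) := by
  choose e he using fun z => exists_forall_isInitSeg (fun n => σ (initSeg z n))
    (fun m n h => hσ.prefix_of_prefix (initSeg_prefix_initSeg z h))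
    (fun n => by simpa using hσ.length_le (initSeg z n))
  have hmem (z) : e z ∈ branches (spanTree σ) := fun n =>
    ⟨initSeg z n, (he z n).initSeg_prefix (by simpa using hσ.length_le (initSeg z n))⟩
  have hbit (z k) : e z (σ (initSeg z k)).length = z k := by
    have := (he z (k + 1)).of_prefix (initSeg_succ z k ▸ hσ (initSeg z k) (z k))
    simpa using (this.getElem (i := (σ (initSeg z k)).length) (by simp)).symm
  have hinj : Injective e := fun z z' hzz => by
    by_contra hne
    have hk : initSeg z (firstDiff z z') = initSeg z' (firstDiff z z') :=
      initSeg_eq_initSeg_iff.2 (mem_cylinder_firstDiff z z')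
    exact apply_firstDiff_ne hne (by rw [← hbit z, ← hbit z', hzz, hk])
  simpa using mk_le_of_injective (f := fun z => (⟨e z, hmem z⟩ : branches (spanTree σ)))
    fun z z' h => hinj (congrArg Subtype.val h)

end IsSplittingSystem

section Fusion

variable (P : Set (List Bool)) (Ψ : ℕ → Set (List Bool) → Set (List Bool) → Prop)

def CanRefinePairs : Prop :=
  ∀ n (C : Bool → Set (List Bool)), (∀ i, IsPerfectTree (C i) ∧ C i ⊆ P) →
    ∃ D : Bool → Set (List Bool), (∀ i, IsPerfectTree (D i) ∧ D i ⊆ C i) ∧ Ψ n (D false) (D true)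

noncomputable def refinePair (n : ℕ) (C : Bool → Set (List Bool)) : Bool → Set (List Bool) :=
  Classical.epsilon fun D => (∀ i, IsPerfectTree (D i) ∧ D i ⊆ C i) ∧ Ψ n (D false) (D true)

/-- The tree at `s ++ [i]` refines the part of the tree at `s` through the `i`-th successor of
its splitting node. The address is stored reversed so that the recursion is structural. -/
noncomputable def fusionTreeRev : List Bool → Set (List Bool)
  | [] => P
  | i :: s =>
    refinePair Ψ s.length
      (fun j => subtreeThrough (fusionTreeRev s) (splittingNode (fusionTreeRev s) ++ [j])) i

noncomputable def fusionTree (s : List Bool) : Set (List Bool) := fusionTreeRev P Ψ s.reverse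

noncomputable def fusionNode (s : List Bool) : List Bool := splittingNode (fusionTree P Ψ s)

lemma fusionTree_append_singleton (s : List Bool) (i : Bool) :
    fusionTree P Ψ (s ++ [i]) = refinePair Ψ s.length
      (fun j => subtreeThrough (fusionTree P Ψ s) (fusionNode P Ψ s ++ [j])) i := by
  simp [fusionTree, fusionTreeRev, fusionNode]

variable {P Ψ} (hP : IsPerfectTree P) (hΨ : CanRefinePairs P Ψ)
include hP hΨ

lemma isPerfectTree_fusionTree_and_subset (s : List Bool) :
    IsPerfectTree (fusionTree P Ψ s) ∧ fusionTree P Ψ s ⊆ P := by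
  induction s using List.reverseRecOn with
  | nil => exact ⟨hP, subset_rfl⟩
  | append_singleton s i ih =>
    have hC (j : Bool) : IsPerfectTree (subtreeThrough (fusionTree P Ψ s) (fusionNode P Ψ s ++ [j]))
        ∧ subtreeThrough (fusionTree P Ψ s) (fusionNode P Ψ s ++ [j]) ⊆ P :=
      ⟨ih.1.subtreeThrough (ih.1.splittingNode_append_mem j),
        (subtreeThrough_subset _ _).trans ih.2⟩
    have := (Classical.epsilon_spec (hΨ s.length _ hC)).1 i
    rw [fusionTree_append_singleton]
    exact ⟨this.1, this.2.trans (hC i).2⟩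

lemma fusionTree_append_singleton_spec (s : List Bool) :
    (∀ i, fusionTree P Ψ (s ++ [i]) ⊆ subtreeThrough (fusionTree P Ψ s) (fusionNode P Ψ s ++ [i]))
      ∧ Ψ s.length (fusionTree P Ψ (s ++ [false])) (fusionTree P Ψ (s ++ [true])) := by
  have hs := isPerfectTree_fusionTree_and_subset hP hΨ s
  have := Classical.epsilon_spec (hΨ s.length _ fun j =>
    ⟨hs.1.subtreeThrough (hs.1.splittingNode_append_mem j), (subtreeThrough_subset _ _).trans hs.2⟩)
  simp only [fusionTree_append_singleton]
  exact ⟨fun i => (this.1 i).2, this.2⟩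

lemma fusionTree_antitone {s t : List Bool} (h : s <+: t) :
    fusionTree P Ψ t ⊆ fusionTree P Ψ s := by
  obtain ⟨u, rfl⟩ := h
  induction u using List.reverseRecOn with
  | nil => simp
  | append_singleton u i ih =>
    rw [← List.append_assoc]
    exact ((fusionTree_append_singleton_spec hP hΨ _).1 i).trans
      ((subtreeThrough_subset _ _).trans ih)

lemma isSplittingSystem_fusionNode : IsSplittingSystem (fusionNode P Ψ) := fun s i => by
  have hsi := (isPerfectTree_fusionTree_and_subset hP hΨ (s ++ [i])).1
  have hsub := (fusionTree_append_singleton_spec hP hΨ s).1 i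
  exact prefix_of_append_mem_subtreeThrough (hsub (hsi.splittingNode_append_mem false))
    (hsub (hsi.splittingNode_append_mem true))

lemma fusionNode_mem (s : List Bool) : fusionNode P Ψ s ∈ fusionTree P Ψ s :=
  (isPerfectTree_fusionTree_and_subset hP hΨ s).1.mem_of_prefix (List.prefix_append _ [false])
    ((isPerfectTree_fusionTree_and_subset hP hΨ s).1.splittingNode_append_mem false)

lemma spanTree_fusionNode_subset : spanTree (fusionNode P Ψ) ⊆ P := fun _ ⟨s, hs⟩ =>
  hP.mem_of_prefix hs ((isPerfectTree_fusionTree_and_subset hP hΨ s).2 (fusionNode_mem hP hΨ s))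

lemma mem_branches_fusionTree {x : ℕ → Bool} (hx : x ∈ branches (spanTree (fusionNode P Ψ)))
    {s : List Bool} (hs : IsInitSeg (fusionNode P Ψ s) x) : x ∈ branches (fusionTree P Ψ s) := by
  have hσ := isSplittingSystem_fusionNode hP hΨ
  intro m
  obtain ⟨t, ht, htx⟩ := hσ.exists_isInitSeg hx (s.length + m + 1)
  have hst : s <+: t :=
    (hσ.prefix_or_prefix (hs.prefix_initSeg (le_max_left _ (fusionNode P Ψ t).length))
      (htx.prefix_initSeg (le_max_right (fusionNode P Ψ s).length _))).resolve_right
      fun h => by have := h.length_le; omega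
  have hmt : m ≤ (fusionNode P Ψ t).length := by have := hσ.length_le t; omega
  exact fusionTree_antitone hP hΨ hst ((isPerfectTree_fusionTree_and_subset hP hΨ t).1.mem_of_prefix
    (htx.initSeg_prefix hmt) (fusionNode_mem hP hΨ t))

end Fusion

namespace IsPerfectTree

variable {P : Set (List Bool)} (hP : IsPerfectTree P)
include hP

lemma exists_isSplittingSystem : ∃ σ, IsSplittingSystem σ ∧ spanTree σ ⊆ P := by
  have hΨ : CanRefinePairs P fun _ _ _ => True :=
    fun _ C hC => ⟨C, fun i => ⟨(hC i).1, subset_rfl⟩, trivial⟩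
  exact ⟨_, isSplittingSystem_fusionNode hP hΨ, spanTree_fusionNode_subset hP hΨ⟩

lemma continuum_le_mk_branches : 𝔠 ≤ #(branches P) := by
  obtain ⟨σ, hσ, hσP⟩ := hP.exists_isSplittingSystem
  exact hσ.continuum_le_mk_branches.trans (mk_le_mk_of_subset (branches_mono hσP))

lemma branches_nonempty : (branches P).Nonempty := by
  rw [← Set.nonempty_coe_sort, ← mk_ne_zero_iff]
  exact (continuum_pos.trans_le hP.continuum_le_mk_branches).ne'

theorem fusion {φ : ℕ → Set (List Bool) → Prop}
    (hφ : ∀ n C, IsPerfectTree C → C ⊆ P → ∃ D, IsPerfectTree D ∧ D ⊆ C ∧ φ n D) :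
    ∃ Q, IsPerfectTree Q ∧ Q ⊆ P ∧
      ∀ x ∈ branches Q, ∀ n, ∃ D, φ n D ∧ branches D ∈ 𝓝[branches Q] x := by
  choose! d hd using hφ
  have hΨ : CanRefinePairs P fun n D₀ D₁ => φ n D₀ ∧ φ n D₁ := fun n C hC => by
    have h i := hd n (C i) (hC i).1 (hC i).2
    exact ⟨fun i => d n (C i), fun i => ⟨(h i).1, (h i).2.1⟩, (h false).2.2, (h true).2.2⟩
  have hσ := isSplittingSystem_fusionNode hP hΨ
  refine ⟨_, hσ.isPerfectTree_spanTree, spanTree_fusionNode_subset hP hΨ, fun x hx n => ?_⟩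
  obtain ⟨s, hs, hxs⟩ := hσ.exists_isInitSeg hx (n + 1)
  obtain ⟨a, i, rfl⟩ := (List.eq_nil_or_concat' s).resolve_left (by rintro rfl; simp at hs)
  obtain rfl : a.length = n := by simpa using hs
  refine ⟨_, ?_, mem_nhdsWithin.2 ⟨_, isOpen_cylinder _ x _, self_mem_cylinder x _,
    fun y ⟨hy, hyQ⟩ => mem_branches_fusionTree hP hΨ hyQ (hxs.of_mem_cylinder hy)⟩⟩
  have := (fusionTree_append_singleton_spec hP hΨ a).2
  cases i
  exacts [this.1, this.2]

theorem fusion_separating {Ψ : Set (List Bool) → Set (List Bool) → Prop}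
    (hΨ : ∀ C₀ C₁, IsPerfectTree C₀ → IsPerfectTree C₁ → C₀ ⊆ P → C₁ ⊆ P →
      ∃ D₀ D₁, IsPerfectTree D₀ ∧ IsPerfectTree D₁ ∧ D₀ ⊆ C₀ ∧ D₁ ⊆ C₁ ∧ Ψ D₀ D₁) :
    ∃ Q, IsPerfectTree Q ∧ Q ⊆ P ∧ ∀ x ∈ branches Q, ∀ y ∈ branches Q, x ≠ y →
      ∃ D₀ D₁, Ψ D₀ D₁ ∧
        (x ∈ branches D₀ ∧ y ∈ branches D₁ ∨ x ∈ branches D₁ ∧ y ∈ branches D₀) := by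
  have hΨ' : CanRefinePairs P fun _ => Ψ := by
    intro _ C hC
    obtain ⟨D₀, D₁, h₀, h₁, hs₀, hs₁, hD⟩ :=
      hΨ (C false) (C true) (hC false).1 (hC true).1 (hC false).2 (hC true).2
    exact ⟨fun i => bif i then D₁ else D₀, Bool.forall_bool.2 ⟨⟨h₀, hs₀⟩, ⟨h₁, hs₁⟩⟩, hD⟩
  have hσ := isSplittingSystem_fusionNode hP hΨ'
  refine ⟨_, hσ.isPerfectTree_spanTree, spanTree_fusionNode_subset hP hΨ', fun x hx y hy hxy => ?_⟩
  obtain ⟨s, hs, hxs⟩ := hσ.exists_isInitSeg hx (firstDiff x y + 1)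
  obtain ⟨t, ht, hyt⟩ := hσ.exists_isInitSeg hy (firstDiff x y + 1)
  have hne : s ≠ t := by
    rintro rfl
    have hk : firstDiff x y < (fusionNode P (fun _ => Ψ) s).length := by
      have := hσ.length_le s; omega
    exact apply_firstDiff_ne hxy ((hxs.getElem hk).symm.trans (hyt.getElem hk))
  obtain ⟨a, i, has, hat⟩ := exists_append_singleton_prefix_of_not_prefix
    (fun h => hne (h.eq_of_length (hs.trans ht.symm)))
    (fun h => hne (h.eq_of_length (ht.trans hs.symm)).symm)
  have hxa := branches_mono (fusionTree_antitone hP hΨ' has) (mem_branches_fusionTree hP hΨ' hx hxs)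
  have hya := branches_mono (fusionTree_antitone hP hΨ' hat) (mem_branches_fusionTree hP hΨ' hy hyt)
  refine ⟨_, _, (fusionTree_append_singleton_spec hP hΨ' a).2, ?_⟩
  cases i
  exacts [.inl ⟨hxa, hya⟩, .inr ⟨hxa, hya⟩]

end IsPerfectTree

universe u

lemma exists_injective_forall_mem_of_mk_le {ι α : Type u} (S : ι → Set α)
    (hS : ∀ i, #ι ≤ #(S i)) : ∃ f : ι → α, Injective f ∧ ∀ i, f i ∈ S i := by
  obtain ⟨r, _, hr⟩ := exists_ord_eq ι
  -- fewer than `#ι` values are chosen before stage `i`, since `r` has order type `(#ι).ord`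
  have fresh (i : ι) (g : ∀ j, r j i → α) : ∃ a ∈ S i, ∀ j h, g j h ≠ a := by
    by_contra! h
    have hsub : S i ⊆ Set.range fun j : {j // r j i} => g j j.2 := fun a ha =>
      let ⟨j, hj, e⟩ := h a ha; ⟨⟨j, hj⟩, e⟩
    exact ((mk_le_mk_of_subset hsub).trans mk_range_le).not_gt
      ((Ordinal.card_typein (r := r) i ▸ card_typein_lt i hr).trans_le (hS i))
  choose pick hpick hfresh using fresh
  let f : ι → α := (IsWellFounded.wf : WellFounded r).fix pick
  have hf (i : ι) : f i = pick i fun j _ => f j := WellFounded.fix_eq _ _ _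
  refine ⟨f, fun i j hij => ?_, fun i => hf i ▸ hpick i _⟩
  rcases trichotomous_of r i j with h | h | h
  · exact absurd (hij.trans (hf j)) (hfresh j (fun k _ => f k) i h)
  · exact h
  · exact absurd (hij.symm.trans (hf i)) (hfresh i (fun k _ => f k) j h)

lemma exists_bernsteinSet : ∃ A : Set (ℕ → Bool), ∀ T, IsPerfectTree T →
    (branches T ∩ A).Nonempty ∧ (branches T \ A).Nonempty := by
  obtain ⟨f, hf, hfT⟩ := exists_injective_forall_mem_of_mk_le
    (fun p : {T // IsPerfectTree T} × Bool => branches p.1.1) fun p => calc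
      #({T // IsPerfectTree T} × Bool) ≤ #(Set (List Bool) × Bool) :=
        mk_le_of_injective (f := fun p => (p.1.1, p.2)) fun p q h => by
          simp only [Prod.mk.injEq] at h
          exact Prod.ext (Subtype.ext h.1) h.2
      _ = 𝔠 := by simp
      _ ≤ #(branches p.1.1) := p.1.2.continuum_le_mk_branches
  refine ⟨Set.range fun T => f (T, true), fun T hT => ⟨⟨_, hfT (⟨T, hT⟩, true), _, rfl⟩,
    ⟨_, hfT (⟨T, hT⟩, false), ?_⟩⟩⟩
  rintro ⟨T', h⟩
  simpa using hf h

lemma exists_preimage_singleton_of_countably_complete {Y : Type*} (𝒰 : Set Y → Prop)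
    (hcompl : ∀ W, 𝒰 W ∨ 𝒰 Wᶜ) (hinter : ∀ W : ℕ → Set Y, (∀ n, 𝒰 (W n)) → 𝒰 (⋂ n, W n))
    (e : Y → ℕ → Bool) : ∃ b, 𝒰 (e ⁻¹' {b}) := by
  have (n : ℕ) : ∃ b, 𝒰 {y | e y n = b} :=
    (hcompl {y | e y n = false}).elim (⟨false, ·⟩)
      fun h => ⟨true, by simpa [Set.compl_ofPred] using h⟩
  choose b hb using this
  refine ⟨b, ?_⟩
  convert hinter _ hb
  ext y
  simp [funext_iff]

def MarczewskiSBelow (R : Set (List Bool)) (A : Set (ℕ → Bool)) : Prop :=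
  ∀ T, IsPerfectTree T → T ⊆ R → ∃ Q, IsPerfectTree Q ∧ Q ⊆ T ∧
    (branches Q ⊆ A ∨ branches Q ∩ A = ∅)

lemma MarczewskiS.marczewskiSBelow {A : Set (ℕ → Bool)} (h : MarczewskiS A) (R : Set (List Bool)) :
    MarczewskiSBelow R A :=
  fun T hT _ => h T hT

namespace MarczewskiSBelow

variable {R : Set (List Bool)} {A : Set (ℕ → Bool)}

lemma mono (h : MarczewskiSBelow R A) {R' : Set (List Bool)} (hR' : R' ⊆ R) :
    MarczewskiSBelow R' A :=
  fun T hT hTR => h T hT (hTR.trans hR')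

lemma congr (h : MarczewskiSBelow R A) {B : Set (ℕ → Bool)}
    (hAB : ∀ x ∈ branches R, x ∈ A ↔ x ∈ B) : MarczewskiSBelow R B := by
  intro T hT hTR
  obtain ⟨Q, hQ, hQT, hA⟩ := h T hT hTR
  have hQR : ∀ x ∈ branches Q, x ∈ A ↔ x ∈ B := fun x hx => hAB x (branches_mono (hQT.trans hTR) hx)
  refine ⟨Q, hQ, hQT, hA.imp (fun hA x hx => (hQR x hx).1 (hA hx)) fun hA => ?_⟩
  exact Set.eq_empty_of_forall_notMem fun x ⟨hx, hxB⟩ =>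
    hA.subset ⟨hx, (hQR x hx).2 hxB⟩

lemma exists_mapsTo {Y : Type*} {g : (ℕ → Bool) → Y} {W : Set Y}
    (h : MarczewskiSBelow R (g ⁻¹' W)) {T : Set (List Bool)} (hT : IsPerfectTree T) (hTR : T ⊆ R) :
    ∃ Q, IsPerfectTree Q ∧ Q ⊆ T ∧ (MapsTo g (branches Q) W ∨ MapsTo g (branches Q) Wᶜ) := by
  obtain ⟨Q, hQ, hQT, hQ'⟩ := h T hT hTR
  exact ⟨Q, hQ, hQT, hQ'.imp id fun h x hx hxW => h.subset ⟨hx, hxW⟩⟩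

end MarczewskiSBelow

lemma IsPerfectTree.exists_subset_of_branches_subset_iUnion {R : Set (List Bool)}
    (hR : IsPerfectTree R) {A : ℕ → Set (ℕ → Bool)} (hA : ∀ n, MarczewskiSBelow R (A n))
    (hcov : branches R ⊆ ⋃ n, A n) :
    ∃ n T, IsPerfectTree T ∧ T ⊆ R ∧ branches T ⊆ A n := by
  by_contra! h
  obtain ⟨Q, hQ, hQR, hQA⟩ := hR.fusion (φ := fun n D => branches D ∩ A n = ∅) fun n C hC hCR => by
    obtain ⟨D, hD, hDC, hDA⟩ := hA n C hC hCR
    exact ⟨D, hD, hDC, hDA.resolve_left (h n D hD (hDC.trans hCR))⟩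
  obtain ⟨x, hx⟩ := hQ.branches_nonempty
  obtain ⟨n, hxn⟩ := Set.mem_iUnion.1 (hcov (branches_mono hQR hx))
  obtain ⟨D, hDA, hD⟩ := hQA x hx n
  exact hDA.subset ⟨mem_of_mem_nhdsWithin hx hD, hxn⟩

namespace IsPerfectTree

variable {Y : Type*} {g : (ℕ → Bool) → Y}

lemma exists_subtree_injOn_of_separated {R : Set (List Bool)} (hR : IsPerfectTree R)
    (hsep : ∀ R₁ R₂, IsPerfectTree R₁ → IsPerfectTree R₂ → R₁ ⊆ R → R₂ ⊆ R →
      ∃ D₁ D₂, IsPerfectTree D₁ ∧ IsPerfectTree D₂ ∧ D₁ ⊆ R₁ ∧ D₂ ⊆ R₂ ∧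
        Disjoint (g '' branches D₁) (g '' branches D₂)) :
    ∃ Q, IsPerfectTree Q ∧ Q ⊆ R ∧ InjOn g (branches Q) := by
  obtain ⟨Q, hQ, hQR, hsepQ⟩ := hR.fusion_separating hsep
  refine ⟨Q, hQ, hQR, fun x hx y hy hxy => by_contra fun hne => ?_⟩
  obtain ⟨D₀, D₁, hD, ⟨hx₀, hy₁⟩ | ⟨hx₁, hy₀⟩⟩ := hsepQ x hx y hy hne
  · exact Set.disjoint_left.1 hD ⟨x, hx₀, rfl⟩ ⟨y, hy₁, hxy.symm⟩
  · exact Set.disjoint_left.1 hD ⟨y, hy₀, rfl⟩ ⟨x, hx₁, hxy⟩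

lemma not_injOn {Q : Set (List Bool)} (hQ : IsPerfectTree Q)
    (hg : ∀ W, MarczewskiSBelow Q (g ⁻¹' W)) : ¬InjOn g (branches Q) := by
  intro hinj
  obtain ⟨A, hA⟩ := exists_bernsteinSet
  obtain ⟨T, hT, hTQ, hin | hout⟩ := hg (g '' (A ∩ branches Q)) Q hQ subset_rfl
  · obtain ⟨x, hxT, hxA⟩ := (hA T hT).2
    obtain ⟨a, ⟨haA, haQ⟩, hax⟩ := hin hxT
    exact hxA (hinj haQ (branches_mono hTQ hxT) hax ▸ haA)
  · obtain ⟨x, hxT, hxA⟩ := (hA T hT).1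
    exact hout.subset ⟨hxT, x, ⟨hxA, branches_mono hTQ hxT⟩, rfl⟩

lemma exists_subtree_eq_of_not_separated {R₁ R₂ : Set (List Bool)} (hR₁ : IsPerfectTree R₁)
    (hR₂ : IsPerfectTree R₂) (hg₁ : ∀ W, MarczewskiSBelow R₁ (g ⁻¹' W))
    (hg₂ : ∀ W, MarczewskiSBelow R₂ (g ⁻¹' W))
    (hns : ∀ D₁ D₂, IsPerfectTree D₁ → IsPerfectTree D₂ → D₁ ⊆ R₁ → D₂ ⊆ R₂ →
      ¬Disjoint (g '' branches D₁) (g '' branches D₂)) :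
    ∃ T, IsPerfectTree T ∧ T ⊆ R₁ ∧ ∃ y, ∀ x ∈ branches T, g x = y := by
  -- `𝒰` is a countably complete ultrafilter on `Y`
  let 𝒰 (W : Set Y) : Prop := ∃ T, IsPerfectTree T ∧ T ⊆ R₁ ∧ MapsTo g (branches T) W
  have hnot {W : Set Y} : 𝒰 W → ¬𝒰 Wᶜ := by
    rintro ⟨T, hT, hTR, hTW⟩ ⟨T', hT', hT'R, hT'W⟩
    obtain ⟨D, hD, hDR, hDW | hDW⟩ := (hg₂ W).exists_mapsTo hR₂ subset_rfl
    · exact hns T' D hT' hD hT'R hDR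
        (Set.disjoint_of_subset hT'W.image_subset hDW.image_subset disjoint_compl_left)
    · exact hns T D hT hD hTR hDR
        (Set.disjoint_of_subset hTW.image_subset hDW.image_subset disjoint_compl_right)
  have hcompl (W : Set Y) : 𝒰 W ∨ 𝒰 Wᶜ := by
    obtain ⟨T, hT, hTR, h | h⟩ := (hg₁ W).exists_mapsTo hR₁ subset_rfl
    exacts [.inl ⟨T, hT, hTR, h⟩, .inr ⟨T, hT, hTR, h⟩]
  have hinter (W : ℕ → Set Y) (hW : ∀ n, 𝒰 (W n)) : 𝒰 (⋂ n, W n) := by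
    obtain ⟨Q, hQ, hQR, hQW⟩ := hR₁.fusion (φ := fun n D => MapsTo g (branches D) (W n))
      fun n C hC hCR => by
        obtain ⟨D, hD, hDC, h | h⟩ := (hg₁ (W n)).exists_mapsTo hC hCR
        exacts [⟨D, hD, hDC, h⟩, absurd ⟨D, hD, hDC.trans hCR, h⟩ (hnot (hW n))]
    refine ⟨Q, hQ, hQR, fun x hx => Set.mem_iInter.2 fun n => ?_⟩
    obtain ⟨D, hDW, hD⟩ := hQW x hx n
    exact hDW (mem_of_mem_nhdsWithin hx hD)
  obtain ⟨b, T, hT, hTR, hTb⟩ :=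
    exists_preimage_singleton_of_countably_complete 𝒰 hcompl hinter (invFun g)
  refine ⟨T, hT, hTR, g b, fun x hx => ?_⟩
  calc g x = g (invFun g (g x)) := (invFun_eq ⟨x, rfl⟩).symm
    _ = g b := congrArg g (hTb hx)

theorem exists_subtree_eq {R : Set (List Bool)} (hR : IsPerfectTree R)
    (hg : ∀ W, MarczewskiSBelow R (g ⁻¹' W)) :
    ∃ T, IsPerfectTree T ∧ T ⊆ R ∧ ∃ y, ∀ x ∈ branches T, g x = y := by
  by_cases hsep : ∀ R₁ R₂, IsPerfectTree R₁ → IsPerfectTree R₂ → R₁ ⊆ R → R₂ ⊆ R →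
      ∃ D₁ D₂, IsPerfectTree D₁ ∧ IsPerfectTree D₂ ∧ D₁ ⊆ R₁ ∧ D₂ ⊆ R₂ ∧
        Disjoint (g '' branches D₁) (g '' branches D₂)
  · obtain ⟨Q, hQ, hQR, hinj⟩ := hR.exists_subtree_injOn_of_separated hsep
    exact absurd hinj (hQ.not_injOn fun W => (hg W).mono hQR)
  · push Not at hsep
    obtain ⟨R₁, R₂, hR₁, hR₂, hR₁R, hR₂R, hns⟩ := hsep
    obtain ⟨T, hT, hTR₁, hTg⟩ := hR₁.exists_subtree_eq_of_not_separated hR₂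
      (fun W => (hg W).mono hR₁R) (fun W => (hg W).mono hR₂R) hns
    exact ⟨T, hT, hTR₁.trans hR₁R, hTg⟩

theorem exists_subtree_mapsTo_of_pairwise_disjoint {X ι : Type*} [TopologicalSpace X]
    {f : (ℕ → Bool) → X} (hf : ∀ U : Set X, IsOpen U → MarczewskiS (f ⁻¹' U))
    {V : ι → Set X} (hVo : ∀ i, IsOpen (V i)) (hVd : Pairwise (Disjoint on V))
    {R : Set (List Bool)} (hR : IsPerfectTree R) (hRV : ∀ x ∈ branches R, ∃ i, f x ∈ V i) :
    ∃ T, IsPerfectTree T ∧ T ⊆ R ∧ ∃ i, MapsTo f (branches T) (V i) := by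
  obtain ⟨x₀, hx₀⟩ := hR.branches_nonempty
  have : Nonempty ι := ⟨(hRV x₀ hx₀).choose⟩
  choose! g hg using hRV
  have hgW (W : Set ι) : MarczewskiSBelow R (g ⁻¹' W) := by
    refine ((hf (⋃ i ∈ W, V i) (isOpen_biUnion fun i _ => hVo i)).marczewskiSBelow R).congr
      fun x hx => ?_
    simp only [Set.mem_preimage, Set.mem_iUnion₂]
    refine ⟨fun ⟨i, hi, hxi⟩ => ?_, fun h => ⟨g x, h, hg x hx⟩⟩
    rwa [← hVd.eq (Set.not_disjoint_iff.2 ⟨f x, hxi, hg x hx⟩)]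
  obtain ⟨T, hT, hTR, i, hTi⟩ := hR.exists_subtree_eq hgW
  exact ⟨T, hT, hTR, i, fun x hx => hTi x hx ▸ hg x (branches_mono hTR hx)⟩

end IsPerfectTree

open Metric in
theorem exists_pairwise_disjoint_open_cover_subset_ball {X : Type*} [MetricSpace X] {δ : ℝ}
    (hδ : 0 < δ) : ∃ V : ℕ → X → Set X, (∀ n y, IsOpen (V n y)) ∧
      (∀ n, Pairwise (Disjoint on V n)) ∧ (∀ n y, V n y ⊆ ball y δ) ∧ ∀ p, ∃ n y, p ∈ V n y := by
  have hwf : WellFounded (WellOrderingRel (α := X)) := WellOrderingRel.isWellOrder.wf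
  let c (p : X) : X := hwf.min {y | p ∈ ball y δ} ⟨p, mem_ball_self hδ⟩
  let ρ (n : ℕ) : ℝ := 1 / (n + 1)
  let core (n : ℕ) (y : X) : Set X := {p | c p = y ∧ ball p (3 * ρ n) ⊆ ball y δ}
  have hρ (n : ℕ) : 0 < ρ n := Nat.one_div_pos_of_nat
  have hfar {n : ℕ} {y y' a b : X} (ha : a ∈ core n y) (hb : b ∈ core n y')
      (hyy' : WellOrderingRel y y') : 3 * ρ n ≤ dist a b := by
    by_contra! h
    -- otherwise `b ∈ ball y δ`, against the minimality of `c b = y'`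
    refine hwf.not_lt_min {z | b ∈ ball z δ} (x := y) (ha.2 (mem_ball_comm.1 h)) ?_
    change WellOrderingRel y (c b)
    rwa [hb.1]
  refine ⟨fun n y => ⋃ p ∈ core n y, ball p (ρ n), fun n y => isOpen_biUnion fun _ _ => isOpen_ball,
    fun n y y' hne => Set.disjoint_left.2 fun q hq hq' => ?_, fun n y q hq => ?_, fun p => ?_⟩
  · obtain ⟨a, ha, hqa⟩ := Set.mem_iUnion₂.1 hq
    obtain ⟨b, hb, hqb⟩ := Set.mem_iUnion₂.1 hq'
    have hab : dist a b < 3 * ρ n := by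
      have := dist_triangle_left a b q
      rw [mem_ball] at hqa hqb
      linarith [hρ n]
    rcases trichotomous_of WellOrderingRel y y' with h | rfl | h
    · exact (hfar ha hb h).not_gt hab
    · exact hne rfl
    · exact (hfar hb ha h).not_gt (dist_comm a b ▸ hab)
  · obtain ⟨a, ha, hqa⟩ := Set.mem_iUnion₂.1 hq
    exact ha.2 (ball_subset_ball (by linarith [hρ n]) hqa)
  · have hp : dist p (c p) < δ := hwf.min_mem {y | p ∈ ball y δ} _
    obtain ⟨n, hn⟩ := exists_nat_one_div_lt (show 0 < (δ - dist p (c p)) / 3 by linarith)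
    refine ⟨n, c p, Set.mem_iUnion₂.2 ⟨p, ⟨rfl, ball_subset_ball' ?_⟩, mem_ball_self (hρ n)⟩⟩
    simp only [ρ]
    linarith

lemma IsPerfectTree.exists_subtree_dist_lt {P : Set (List Bool)} (hP : IsPerfectTree P)
    {X : Type*} [MetricSpace X] {f : (ℕ → Bool) → X}
    (hf : ∀ U : Set X, IsOpen U → MarczewskiS (f ⁻¹' U)) {ε : ℝ} (hε : 0 < ε) :
    ∃ Q, IsPerfectTree Q ∧ Q ⊆ P ∧ ∀ a ∈ branches Q, ∀ b ∈ branches Q, dist (f a) (f b) < ε := by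
  obtain ⟨V, hVo, hVd, hVball, hVcov⟩ := exists_pairwise_disjoint_open_cover_subset_ball (X := X)
    (half_pos hε)
  obtain ⟨n, R, hR, hRP, hRV⟩ := hP.exists_subset_of_branches_subset_iUnion
    (A := fun n => f ⁻¹' ⋃ y, V n y)
    (fun n => (hf _ (isOpen_iUnion (hVo n))).marczewskiSBelow P)
    fun x _ => by simpa using hVcov (f x)
  obtain ⟨Q, hQ, hQR, y, hQy⟩ := hR.exists_subtree_mapsTo_of_pairwise_disjoint hf (hVo n) (hVd n)
    fun x hx => Set.mem_iUnion.1 (hRV hx)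
  refine ⟨Q, hQ, hQR.trans hRP, fun a ha b hb => ?_⟩
  have ha' := Metric.mem_ball.1 (hVball n y (hQy ha))
  have hb' := Metric.mem_ball.1 (hVball n y (hQy hb))
  linarith [dist_triangle_right (f a) (f b) y]

lemma exists_cylinder_inter_subset {s t : Set (ℕ → Bool)} {x : ℕ → Bool} (h : t ∈ 𝓝[s] x) :
    ∃ k, cylinder x k ∩ s ⊆ t := by
  obtain ⟨u, hu, hut⟩ := mem_nhdsWithin_iff_exists_mem_nhds_inter.1 h
  obtain ⟨_, ⟨y, k, rfl⟩, hxy, hyu⟩ := (isTopologicalBasis_cylinders _).mem_nhds_iff.1 hu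
  exact ⟨k, fun z hz => hut ⟨hyu (mem_cylinder_iff_eq.1 hxy ▸ hz.1), hz.2⟩⟩

theorem IsPerfectTree.exists_subtree_continuousOn {X : Type*} [MetricSpace X]
    {f : (ℕ → Bool) → X} (hf : ∀ U : Set X, IsOpen U → MarczewskiS (f ⁻¹' U))
    {T : Set (List Bool)} (hT : IsPerfectTree T) :
    ∃ Q, IsPerfectTree Q ∧ Q ⊆ T ∧ ContinuousOn f (branches Q) := by
  obtain ⟨Q, hQ, hQT, hQf⟩ := hT.fusion
    (φ := fun n D => ∀ a ∈ branches D, ∀ b ∈ branches D, dist (f a) (f b) < 1 / (n + 1))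
    fun n C hC _ => hC.exists_subtree_dist_lt hf Nat.one_div_pos_of_nat
  refine ⟨Q, hQ, hQT, fun x hx => Metric.tendsto_nhds.2 fun ε hε => ?_⟩
  obtain ⟨n, hn⟩ := exists_nat_one_div_lt hε
  obtain ⟨D, hDf, hD⟩ := hQf x hx n
  exact mem_of_superset hD fun y hy => (hDf y hy x (mem_of_mem_nhdsWithin hx hD)).trans hn

theorem marczewskiS_preimage_of_forall_continuousOn {X : Type*} [TopologicalSpace X]
    {f : (ℕ → Bool) → X}
    (hf : ∀ T, IsPerfectTree T → ∃ Q, IsPerfectTree Q ∧ Q ⊆ T ∧ ContinuousOn f (branches Q))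
    {U : Set X} (hU : IsOpen U) : MarczewskiS (f ⁻¹' U) := by
  intro T hT
  obtain ⟨Q, hQ, hQT, hQf⟩ := hf T hT
  rcases (branches Q ∩ f ⁻¹' U).eq_empty_or_nonempty with hempty | ⟨x, hxQ, hxU⟩
  · exact ⟨Q, hQ, hQT, .inr hempty⟩
  obtain ⟨k, hk⟩ := exists_cylinder_inter_subset (hQf x hxQ (hU.mem_nhds hxU))
  refine ⟨subtreeThrough Q (initSeg x k), hQ.subtreeThrough (hxQ k),
    (subtreeThrough_subset _ _).trans hQT, .inl fun z hz => ?_⟩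
  obtain ⟨hzQ, hzx⟩ := mem_branches_subtreeThrough.1 hz
  exact hk ⟨initSeg_eq_initSeg_iff.1 (by simpa [IsInitSeg] using hzx), hzQ⟩

/-- `f` is (s)-measurable iff it is continuous on the branches of a perfect subtree
of every perfect tree. -/
theorem sMeasurable_iff_continuousOn {X : Type*} [MetricSpace X] (f : (ℕ → Bool) → X) :
    (∀ U : Set X, IsOpen U → MarczewskiS (f ⁻¹' U)) ↔
    ∀ T, IsPerfectTree T → ∃ Q, IsPerfectTree Q ∧ Q ⊆ T ∧
      ContinuousOn f (branches Q) :=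
  ⟨fun hf _ hT => hT.exists_subtree_continuousOn hf,
    fun hf _ hU => marczewskiS_preimage_of_forall_continuousOn hf hU⟩
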